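/- If ξ₁,…,ξ_n are independent, mean-zero random variables in a separable Hilbert space H with ‖ξ_i‖ ≤ M almost surely, then for every ε > 0, the probability that ‖(1/n) Σᵢ ξᵢ‖ ≥ ε is at most 2 exp(−nε²/(2M²)). -/

import Mathlib

/-!
Pinelis' argument. For `‖y‖ ≤ M` the squared norm `‖x + y‖² ≤ ‖x‖² + 2⟪x, y⟫ + M²` is affine in
`⟪x, y⟫ ∈ [-‖x‖M, ‖x‖M]`, and `p ↦ cosh √p` is convex, so `cosh (l‖x + y‖)` lies below the chord
between the extreme cases `‖x‖ ± M`: it is at most `cosh (l‖x‖) cosh (lM)` plus a term linear in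
`y`. When `y = ξⱼ` is independent of `x = Σ_{i<j} ξᵢ` and centred, the linear term has mean zero,
so `E cosh (l‖Σᵢ ξᵢ‖) ≤ cosh (lM)ⁿ ≤ exp (n l²M²/2)`. A Chernoff bound, using `exp ≤ 2 cosh`,
with `l = ε/M²` finishes the proof.
-/

open MeasureTheory ProbabilityTheory Real
open scoped BigOperators ENNReal RealInnerProductSpace

open scoped Nat in
theorem Real.convexOn_cosh_sqrt : ConvexOn ℝ (Set.Ici 0) fun p => cosh (√p) := by
  have hasSum_cosh_sqrt {p : ℝ} (hp : 0 ≤ p) :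
      HasSum (fun n => p ^ n / (2 * n)!) (cosh (√p)) := by
    simpa only [pow_mul, sq_sqrt hp] using hasSum_cosh (√p)
  refine ⟨convex_Ici 0, fun p hp q hq a b ha hb hab => ?_⟩
  have hpq : 0 ≤ a • p + b • q := (convex_Ici 0) hp hq ha hb hab
  refine hasSum_le (fun n => ?_) (hasSum_cosh_sqrt hpq)
    (((hasSum_cosh_sqrt hp).mul_left a).add ((hasSum_cosh_sqrt hq).mul_left b))
  have := (convexOn_pow n).2 hp hq ha hb hab
  simp only [smul_eq_mul] at this ⊢
  rw [mul_div_assoc', mul_div_assoc', ← add_div]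
  gcongr

theorem Real.cosh_mul_le_of_sq_le {l a b r t : ℝ} (hl : 0 ≤ l) (ha : 0 ≤ a) (hb : 0 ≤ b)
    (hr : 0 ≤ r) (ht : |t| ≤ a * b) (hr2 : r ^ 2 ≤ a ^ 2 + 2 * t + b ^ 2) :
    cosh (l * r) ≤ cosh (l * a) * cosh (l * b) + sinh (l * a) * sinh (l * b) / (a * b) * t := by
  have cosh_mono {u v : ℝ} (hu : 0 ≤ u) (huv : u ≤ v) : cosh u ≤ cosh v :=
    cosh_strictMonoOn.monotoneOn hu (hu.trans huv) huv
  rcases (mul_nonneg ha hb).eq_or_lt with hab | hab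
  · have ht0 : t = 0 := abs_nonpos_iff.1 (hab ▸ ht)
    have hsinh : sinh (l * a) * sinh (l * b) = 0 := by
      rcases mul_eq_zero.1 hab.symm with rfl | rfl <;> simp
    have hrab : r ≤ a + b := by nlinarith
    calc cosh (l * r) ≤ cosh (l * (a + b)) := cosh_mono (by positivity) (by gcongr)
      _ = _ := by rw [mul_add, cosh_add, hsinh, ht0]; ring
  · have ha0 : a ≠ 0 := left_ne_zero_of_mul hab.ne'
    have hb0 : b ≠ 0 := right_ne_zero_of_mul hab.ne'
    -- the chord weight: `θ (a + b)² + (1 - θ) (a - b)² = a² + 2t + b²`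
    set θ := (a * b + t) / (2 * (a * b))
    have hθ0 : 0 ≤ θ := div_nonneg (by linarith [neg_abs_le t]) (by positivity)
    have hθ1 : 0 ≤ 1 - θ := by
      rw [sub_nonneg, div_le_one (by positivity)]; linarith [le_abs_self t]
    have hsq : (l * r) ^ 2 ≤ θ * (l * (a + b)) ^ 2 + (1 - θ) * (l * (a - b)) ^ 2 := by
      have : θ * (l * (a + b)) ^ 2 + (1 - θ) * (l * (a - b)) ^ 2
          = l ^ 2 * (a ^ 2 + 2 * t + b ^ 2) := by
        unfold θ; field_simp; ring
      rw [this, mul_pow]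
      gcongr
    calc cosh (l * r) = cosh √((l * r) ^ 2) := by rw [sqrt_sq (by positivity)]
      _ ≤ cosh √(θ * (l * (a + b)) ^ 2 + (1 - θ) * (l * (a - b)) ^ 2) :=
          cosh_mono (sqrt_nonneg _) (sqrt_le_sqrt hsq)
      _ ≤ θ * cosh √((l * (a + b)) ^ 2) + (1 - θ) * cosh √((l * (a - b)) ^ 2) :=
          convexOn_cosh_sqrt.2 (Set.mem_Ici.2 (sq_nonneg _)) (Set.mem_Ici.2 (sq_nonneg _))
            hθ0 hθ1 (by ring)
      _ = _ := by
          rw [sqrt_sq_eq_abs, sqrt_sq_eq_abs, cosh_abs, cosh_abs, mul_add, mul_sub, cosh_add,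
            cosh_sub]
          unfold θ; field_simp; ring

theorem le_norm_of_le_norm_natCast_inv_smul {E : Type*} [NormedAddCommGroup E] [NormedSpace ℝ E]
    {n : ℕ} {ε : ℝ} {x : E} (h : ε ≤ ‖(n : ℝ)⁻¹ • x‖) : n * ε ≤ ‖x‖ := by
  rw [norm_smul, norm_inv, RCLike.norm_natCast] at h
  exact (mul_le_mul_of_nonneg_left h n.cast_nonneg).trans (mul_inv_left_le (norm_nonneg x))

section Hilbert

variable {H : Type*} [NormedAddCommGroup H] [InnerProductSpace ℝ H]

-- At `x = 0` the coefficient is the junk value `_ / 0 = 0`, which is the right slope there.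
noncomputable def coshNormSlope (l M : ℝ) (x : H) : H :=
  (sinh (l * ‖x‖) * sinh (l * M) / (‖x‖ * M)) • x

theorem cosh_mul_norm_add_le {l M : ℝ} (hl : 0 ≤ l) (x : H) {y : H} (hy : ‖y‖ ≤ M) :
    cosh (l * ‖x + y‖) ≤ cosh (l * ‖x‖) * cosh (l * M) + ⟪coshNormSlope l M x, y⟫ := by
  rw [coshNormSlope, real_inner_smul_left]
  refine cosh_mul_le_of_sq_le hl (norm_nonneg x) ((norm_nonneg y).trans hy) (norm_nonneg _)
    ((abs_real_inner_le_norm x y).trans (by gcongr)) ?_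
  rw [norm_add_sq_real]
  gcongr

theorem norm_coshNormSlope_le {l M : ℝ} (hl : 0 ≤ l) (hM : 0 ≤ M) (x : H) :
    ‖coshNormSlope l M x‖ ≤ sinh (l * ‖x‖) * sinh (l * M) / M := by
  have hsinh : 0 ≤ sinh (l * ‖x‖) * sinh (l * M) := by
    have := norm_nonneg x
    positivity
  rw [coshNormSlope, norm_smul, Real.norm_eq_abs, abs_of_nonneg (by positivity)]
  rcases eq_or_ne ‖x‖ 0 with hx | hx
  · rw [hx, mul_zero]; positivity
  · rw [mul_comm ‖x‖ M, ← div_div, div_mul_cancel₀ _ hx]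

variable [MeasurableSpace H] [BorelSpace H]

theorem measurable_coshNormSlope (l M : ℝ) : Measurable (coshNormSlope (H := H) l M) := by
  unfold coshNormSlope
  fun_prop

end Hilbert

section Probability

variable {Ω : Type*} [MeasurableSpace Ω] {μ : Measure Ω}

theorem integrable_cosh_mul_norm [IsFiniteMeasure μ] {E : Type*} [NormedAddCommGroup E]
    {S : Ω → E} (hS : AEStronglyMeasurable S μ) {K : ℝ} (hK : ∀ᵐ ω ∂μ, ‖S ω‖ ≤ K) (l : ℝ) :
    Integrable (fun ω => cosh (l * ‖S ω‖)) μ := by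
  refine .of_bound (continuous_cosh.comp_aestronglyMeasurable (hS.norm.const_mul l))
    (cosh (l * K)) ?_
  filter_upwards [hK] with ω hω
  rw [Real.norm_eq_abs, abs_of_pos (cosh_pos _), cosh_le_cosh, abs_mul, abs_mul,
    abs_norm, abs_of_nonneg ((norm_nonneg _).trans hω)]
  gcongr

theorem measure_ge_le_two_mul_exp_mul_integral_cosh [IsFiniteMeasure μ] {Z : Ω → ℝ}
    (hZ : AEMeasurable Z μ) {l : ℝ} (hl : 0 ≤ l)
    (hint : Integrable (fun ω => cosh (l * Z ω)) μ) (a : ℝ) :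
    μ.real {ω | a ≤ Z ω} ≤ 2 * exp (-l * a) * ∫ ω, cosh (l * Z ω) ∂μ := by
  have exp_le_two_mul_cosh (u : ℝ) : exp u ≤ 2 * cosh u := by
    rw [cosh_eq]; linarith [exp_pos (-u)]
  have hexp : Integrable (fun ω => exp (l * Z ω)) μ := by
    refine (hint.const_mul 2).mono' (by fun_prop) (ae_of_all _ fun ω => ?_)
    rw [Real.norm_eq_abs, abs_of_pos (exp_pos _)]
    exact exp_le_two_mul_cosh _
  calc μ.real {ω | a ≤ Z ω} ≤ exp (-l * a) * mgf Z μ l := measure_ge_le_exp_mul_mgf a hl hexp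
    _ ≤ exp (-l * a) * ∫ ω, 2 * cosh (l * Z ω) ∂μ := by
      gcongr
      exact integral_mono hexp (hint.const_mul 2) fun ω => exp_le_two_mul_cosh _
    _ = 2 * exp (-l * a) * ∫ ω, cosh (l * Z ω) ∂μ := by rw [integral_const_mul]; ring

theorem ae_norm_sum_le {ι E : Type*} [NormedAddCommGroup E] {ξ : ι → Ω → E} {M : ℝ}
    (hbdd : ∀ i, ∀ᵐ ω ∂μ, ‖ξ i ω‖ ≤ M) (s : Finset ι) :
    ∀ᵐ ω ∂μ, ‖∑ i ∈ s, ξ i ω‖ ≤ s.card * M := by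
  filter_upwards [s.eventually_all.2 fun i _ => hbdd i] with ω hω
  calc ‖∑ i ∈ s, ξ i ω‖ ≤ ∑ i ∈ s, ‖ξ i ω‖ := norm_sum_le _ _
    _ ≤ s.card * M := by simpa using s.sum_le_card_nsmul _ M hω

variable [IsProbabilityMeasure μ] {H : Type*} [NormedAddCommGroup H] [InnerProductSpace ℝ H]
  [CompleteSpace H] [MeasurableSpace H] [BorelSpace H] [SecondCountableTopology H]

theorem integral_cosh_mul_norm_add_le {X Y : Ω → H} (hX : Measurable X) (hY : Measurable Y)
    (hXY : IndepFun X Y μ) {l K M : ℝ} (hl : 0 ≤ l) (hXK : ∀ᵐ ω ∂μ, ‖X ω‖ ≤ K)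
    (hYM : ∀ᵐ ω ∂μ, ‖Y ω‖ ≤ M) (hY0 : μ[Y] = 0) :
    ∫ ω, cosh (l * ‖X ω + Y ω‖) ∂μ ≤ (∫ ω, cosh (l * ‖X ω‖) ∂μ) * cosh (l * M) := by
  have hM : 0 ≤ M := by
    obtain ⟨ω, hω⟩ := hYM.exists
    exact (norm_nonneg _).trans hω
  set V := fun ω => coshNormSlope l M (X ω)
  have hV : Integrable V μ := by
    refine .of_bound ((measurable_coshNormSlope l M).comp hX).aestronglyMeasurable
      (sinh (l * K) * sinh (l * M) / M) ?_
    filter_upwards [hXK] with ω hω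
    refine (norm_coshNormSlope_le hl hM _).trans ?_
    gcongr
    exact sinh_le_sinh.2 (by gcongr)
  have hYint : Integrable Y μ := .of_bound hY.aestronglyMeasurable M hYM
  have hVY : IndepFun V Y μ := hXY.comp (measurable_coshNormSlope l M) measurable_id
  have hcoshX := integrable_cosh_mul_norm hX.aestronglyMeasurable hXK l
  have hcoshXY : Integrable (fun ω => cosh (l * ‖X ω + Y ω‖)) μ := by
    refine integrable_cosh_mul_norm (hX.add hY).aestronglyMeasurable (K := K + M) ?_ l
    filter_upwards [hXK, hYM] with ω hXω hYω
    exact (norm_add_le _ _).trans (add_le_add hXω hYω)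
  have hinner_int : Integrable (fun ω => ⟪V ω, Y ω⟫) μ :=
    hVY.integrable_bilin hV hYint (innerSL ℝ)
  have hinner : ∫ ω, ⟪V ω, Y ω⟫ ∂μ = 0 := by
    have := hVY.integral_bilin hV hYint (innerSL ℝ)
    rwa [hY0, map_zero] at this
  calc ∫ ω, cosh (l * ‖X ω + Y ω‖) ∂μ
      ≤ ∫ ω, (cosh (l * ‖X ω‖) * cosh (l * M) + ⟪V ω, Y ω⟫) ∂μ := by
        refine integral_mono_ae hcoshXY ((hcoshX.mul_const _).add hinner_int) ?_
        filter_upwards [hYM] with ω hω using cosh_mul_norm_add_le hl _ hω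
    _ = (∫ ω, cosh (l * ‖X ω‖) ∂μ) * cosh (l * M) := by
        rw [integral_add (hcoshX.mul_const _) hinner_int, integral_mul_const, hinner, add_zero]

theorem integral_cosh_mul_norm_sum_le {ι : Type*} {ξ : ι → Ω → H}
    (hmeas : ∀ i, Measurable (ξ i)) (hindep : iIndepFun ξ μ) (hmean : ∀ i, μ[ξ i] = 0)
    {M l : ℝ} (hbdd : ∀ i, ∀ᵐ ω ∂μ, ‖ξ i ω‖ ≤ M) (hl : 0 ≤ l) (s : Finset ι) :
    ∫ ω, cosh (l * ‖∑ i ∈ s, ξ i ω‖) ∂μ ≤ cosh (l * M) ^ s.card := by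
  classical
  induction s using Finset.induction_on with
  | empty => simp
  | insert j s hj ih =>
    have hX : Measurable fun ω => ∑ i ∈ s, ξ i ω := Finset.measurable_sum s fun i _ => hmeas i
    have hXY : IndepFun (fun ω => ∑ i ∈ s, ξ i ω) (ξ j) μ := by
      simpa only [Finset.sum_fn] using hindep.indepFun_finsetSum_of_notMem hmeas hj
    simp_rw [Finset.sum_insert hj, add_comm (ξ j _)]
    calc _ ≤ (∫ ω, cosh (l * ‖∑ i ∈ s, ξ i ω‖) ∂μ) * cosh (l * M) :=
          integral_cosh_mul_norm_add_le hX (hmeas j) hXY hl (ae_norm_sum_le hbdd s) (hbdd j)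
            (hmean j)
      _ ≤ cosh (l * M) ^ s.card * cosh (l * M) := by gcongr
      _ = cosh (l * M) ^ (insert j s).card := by rw [Finset.card_insert_of_notMem hj, pow_succ]

end Probability

theorem hoeffding_hilbert_general
    {Ω : Type*} [MeasurableSpace Ω] (μ : Measure Ω) [IsProbabilityMeasure μ]
    {H : Type*} [NormedAddCommGroup H] [InnerProductSpace ℝ H] [CompleteSpace H]
    [MeasurableSpace H] [BorelSpace H] [SecondCountableTopology H]
    (n : ℕ) (ξ : Fin n → Ω → H) (M : ℝ) (hM : 0 < M)
    (hmeas : ∀ i, Measurable (ξ i))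
    (hindep : iIndepFun ξ μ)
    (hmean : ∀ i, ∫ ω, ξ i ω ∂μ = 0)
    (hbdd : ∀ i, ∀ᵐ ω ∂μ, ‖ξ i ω‖ ≤ M)
    (ε : ℝ) (hε : 0 < ε) :
    μ {ω | ε ≤ ‖(n : ℝ)⁻¹ • ∑ i, ξ i ω‖} ≤
      ENNReal.ofReal (2 * Real.exp (-(n * ε ^ 2) / (2 * M ^ 2))) := by
  set l := ε / M ^ 2
  have hl : 0 ≤ l := by positivity
  have hS : Measurable fun ω => ∑ i, ξ i ω := Finset.measurable_sum _ fun i _ => hmeas i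
  have hcosh : ∫ ω, cosh (l * ‖∑ i, ξ i ω‖) ∂μ ≤ cosh (l * M) ^ n := by
    simpa using integral_cosh_mul_norm_sum_le hmeas hindep hmean hbdd hl Finset.univ
  have htail := measure_ge_le_two_mul_exp_mul_integral_cosh hS.norm.aemeasurable hl
    (integrable_cosh_mul_norm hS.aestronglyMeasurable (ae_norm_sum_le hbdd _) l) (n * ε)
  rw [← ofReal_measureReal]
  gcongr
  calc μ.real {ω | ε ≤ ‖(n : ℝ)⁻¹ • ∑ i, ξ i ω‖}
      ≤ μ.real {ω | n * ε ≤ ‖∑ i, ξ i ω‖} :=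
        measureReal_mono fun _ => le_norm_of_le_norm_natCast_inv_smul
    _ ≤ 2 * exp (-l * (n * ε)) * ∫ ω, cosh (l * ‖∑ i, ξ i ω‖) ∂μ := htail
    _ ≤ 2 * exp (-l * (n * ε)) * exp ((l * M) ^ 2 / 2) ^ n := by
      gcongr
      exact hcosh.trans (pow_le_pow_left₀ (cosh_pos _).le (cosh_le_exp_half_sq _) n)
    _ = 2 * exp (-(n * ε ^ 2) / (2 * M ^ 2)) := by
      rw [← exp_nat_mul, mul_assoc, ← exp_add]
      congr 2
      unfold l
      field_simp
      ring

/-- Hoeffding's inequality in Hilbert spaces, Pinelis: if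
`ξ₁,…,ξ_n` are independent mean-zero random variables in a separable Hilbert
space `H` with `‖ξ_i‖ ≤ M` almost surely, then for every `ε > 0`,
`P(‖(1/n) Σᵢ ξᵢ‖ ≥ ε) ≤ 2 exp(−n ε²/(2M²))`. -/
theorem hoeffding_hilbert
    {Ω : Type*} [MeasurableSpace Ω] (μ : Measure Ω) [IsProbabilityMeasure μ]
    {H : Type*} [NormedAddCommGroup H] [InnerProductSpace ℝ H] [CompleteSpace H]
    [MeasurableSpace H] [BorelSpace H] [SecondCountableTopology H]
    (n : ℕ) (hn : 0 < n) (ξ : Fin n → Ω → H) (M : ℝ) (hM : 0 < M)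
    (hmeas : ∀ i, Measurable (ξ i))
    (hindep : iIndepFun ξ μ)
    (hint : ∀ i, Integrable (ξ i) μ)
    (hmean : ∀ i, ∫ ω, ξ i ω ∂μ = 0)
    (hbdd : ∀ i, ∀ᵐ ω ∂μ, ‖ξ i ω‖ ≤ M)
    (ε : ℝ) (hε : 0 < ε) :
    μ {ω | ε ≤ ‖(n : ℝ)⁻¹ • ∑ i, ξ i ω‖} ≤
      ENNReal.ofReal (2 * Real.exp (-(n * ε ^ 2) / (2 * M ^ 2))) :=
  hoeffding_hilbert_general μ n ξ M hM hmeas hindep hmean hbdd ε hε
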